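/- arXiv:1011.1001 — 8 statements merged into one kernel-verified Lean document; each statement's English description precedes it below -/
import Mathlib

section
/- Let Γ be a lattice in ℝ^d. The set OC(Γ) of orthogonal transformations R ∈ O(d) such that Γ ∩ RΓ has finite index in Γ forms a subgroup of O(d): it contains the identity, is closed under inverses, and is closed under composition. -/
/-- `R` is a coincidence isometry of the lattice `Γ`: the coincidence site lattice
`Γ ⊓ RΓ` has finite index in `Γ`. -/
def IsCoincidenceIsometry {d : ℕ} (Γ : AddSubgroup (EuclideanSpace ℝ (Fin d)))
    (R : EuclideanSpace ℝ (Fin d) ≃ₗᵢ[ℝ] EuclideanSpace ℝ (Fin d)) : Prop :=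
  AddSubgroup.relIndex
    (Γ ⊓ AddSubgroup.map R.toLinearEquiv.toLinearMap.toAddMonoidHom Γ) Γ ≠ 0

/-!
A lattice `Λ ≅ ℤ^d` contains a subgroup `K` with finite index iff `K ≅ ℤ^d`; hence for two
lattices `Λ, Λ'` of the same rank, `Λ ⊓ Λ'` has finite index in `Λ` iff it has finite index in
`Λ'`. Applying `R⁻¹` turns `[Γ : Γ ⊓ R⁻¹Γ]` into `[RΓ : RΓ ⊓ Γ]`, so inverses of coincidence
isometries are coincidence isometries. For composition, `[SΓ : SΓ ⊓ SRΓ] = [Γ : Γ ⊓ RΓ]` is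
finite, and finite relative index is transitive.
-/

open AddSubgroup

namespace AddSubgroup

variable {G : Type*} [AddCommGroup G] {ι : Type*} [Finite ι]

theorem relIndex_ne_zero_iff_nonempty_inf_addEquiv {K Λ : AddSubgroup G} (e : Λ ≃+ (ι → ℤ)) :
    K.relIndex Λ ≠ 0 ↔ Nonempty (↥(K ⊓ Λ) ≃+ (ι → ℤ)) := by
  let f : ↥(K ⊓ Λ) ≃+ ↥((K.addSubgroupOf Λ).map (e : Λ →+ (ι → ℤ))) :=
    ((addSubgroupOfEquivOfLe inf_le_right).symm.trans
      (.addSubgroupCongr (inf_addSubgroupOf_right K Λ))).trans (e.addSubgroupMap _)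
  rw [relIndex, ← index_map_equiv _ e, Int.addSubgroup_index_ne_zero_iff]
  exact ⟨fun ⟨g⟩ ↦ ⟨f.trans g⟩, fun ⟨g⟩ ↦ ⟨f.symm.trans g⟩⟩

theorem relIndex_ne_zero_comm {Λ Λ' : AddSubgroup G} (e : Λ ≃+ (ι → ℤ)) (e' : Λ' ≃+ (ι → ℤ)) :
    Λ.relIndex Λ' ≠ 0 ↔ Λ'.relIndex Λ ≠ 0 := by
  rw [relIndex_ne_zero_iff_nonempty_inf_addEquiv e', relIndex_ne_zero_iff_nonempty_inf_addEquiv e,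
    inf_comm]

theorem relIndex_map_symm_ne_zero {Λ : AddSubgroup G} (e : Λ ≃+ (ι → ℤ)) {σ : G ≃+ G}
    (h : (Λ.map (σ : G →+ G)).relIndex Λ ≠ 0) : (Λ.map (σ.symm : G →+ G)).relIndex Λ ≠ 0 := by
  rw [← relIndex_map_map_of_injective (f := (σ : G →+ G)) _ _ σ.injective, map_map]
  have hid : (σ : G →+ G).comp (σ.symm : G →+ G) = .id G := by ext; simp
  rw [hid, map_id]
  exact (relIndex_ne_zero_comm ((σ.addSubgroupMap Λ).symm.trans e) e).mp h

theorem relIndex_map_trans_ne_zero {Λ : AddSubgroup G} {σ τ : G ≃+ G}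
    (hσ : (Λ.map (σ : G →+ G)).relIndex Λ ≠ 0) (hτ : (Λ.map (τ : G →+ G)).relIndex Λ ≠ 0) :
    (Λ.map (σ.trans τ : G →+ G)).relIndex Λ ≠ 0 := by
  have hστ : Λ.map (σ.trans τ : G →+ G) = (Λ.map (σ : G →+ G)).map (τ : G →+ G) := by
    rw [map_map]; rfl
  rw [hστ]
  refine relIndex_ne_zero_trans ?_ hτ
  rwa [relIndex_map_map_of_injective _ _ τ.injective]

end AddSubgroup

theorem Module.Basis.nonempty_closure_range_addEquiv {ι K V : Type*} [Finite ι] [Field K]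
    [CharZero K] [AddCommGroup V] [Module K V] (b : Basis ι K V) :
    Nonempty (↥(closure (Set.range b)) ≃+ (ι → ℤ)) :=
  ⟨(AddEquiv.addSubgroupCongr (Submodule.span_int_eq_addSubgroupClosure _).symm).trans
    (b.restrictScalars ℤ).equivFun.toAddEquiv⟩

section

variable {d : ℕ} {Γ : AddSubgroup (EuclideanSpace ℝ (Fin d))}

theorem isCoincidenceIsometry_iff (R : EuclideanSpace ℝ (Fin d) ≃ₗᵢ[ℝ] EuclideanSpace ℝ (Fin d)) :
    IsCoincidenceIsometry Γ R ↔
      (Γ.map (R.toLinearEquiv.toAddEquiv : _ →+ _)).relIndex Γ ≠ 0 := by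
  rw [IsCoincidenceIsometry, inf_relIndex_left]
  rfl

theorem isCoincidenceIsometry_refl :
    IsCoincidenceIsometry Γ (LinearIsometryEquiv.refl ℝ (EuclideanSpace ℝ (Fin d))) := by
  rw [isCoincidenceIsometry_iff]
  change (Γ.map (.id _)).relIndex Γ ≠ 0
  rw [map_id, relIndex_self]
  exact one_ne_zero

theorem IsCoincidenceIsometry.symm {ι : Type*} [Finite ι] (e : Γ ≃+ (ι → ℤ))
    {R : EuclideanSpace ℝ (Fin d) ≃ₗᵢ[ℝ] EuclideanSpace ℝ (Fin d)}
    (hR : IsCoincidenceIsometry Γ R) : IsCoincidenceIsometry Γ R.symm := by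
  rw [isCoincidenceIsometry_iff] at hR ⊢
  exact relIndex_map_symm_ne_zero (σ := R.toLinearEquiv.toAddEquiv) e hR

theorem IsCoincidenceIsometry.trans
    {R S : EuclideanSpace ℝ (Fin d) ≃ₗᵢ[ℝ] EuclideanSpace ℝ (Fin d)}
    (hR : IsCoincidenceIsometry Γ R) (hS : IsCoincidenceIsometry Γ S) :
    IsCoincidenceIsometry Γ (R.trans S) := by
  rw [isCoincidenceIsometry_iff] at hR hS ⊢
  exact relIndex_map_trans_ne_zero (σ := R.toLinearEquiv.toAddEquiv)
    (τ := S.toLinearEquiv.toAddEquiv) hR hS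

end

theorem stmt_3 {d : ℕ} (Γ : AddSubgroup (EuclideanSpace ℝ (Fin d)))
    (hΓ : ∃ b : Module.Basis (Fin d) ℝ (EuclideanSpace ℝ (Fin d)),
      Γ = AddSubgroup.closure (Set.range b)) :
    IsCoincidenceIsometry Γ (LinearIsometryEquiv.refl ℝ (EuclideanSpace ℝ (Fin d))) ∧
    (∀ R, IsCoincidenceIsometry Γ R → IsCoincidenceIsometry Γ R.symm) ∧
    (∀ R S, IsCoincidenceIsometry Γ R → IsCoincidenceIsometry Γ S →
      IsCoincidenceIsometry Γ (R.trans S)) := by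
  obtain ⟨b, rfl⟩ := hΓ
  obtain ⟨e⟩ := b.nonempty_closure_range_addEquiv
  exact ⟨isCoincidenceIsometry_refl, fun _ ↦ .symm e, fun _ _ ↦ .trans⟩
end

section
/- Let Γ₂ be a finite-index subgroup of a lattice Γ₁ in ℝ^d and let R ∈ O(d). Then R is a coincidence isometry of Γ₁ if and only if R is a coincidence isometry of Γ₂; i.e., Γ₁ ∩ RΓ₁ has finite index in Γ₁ exactly when Γ₂ ∩ RΓ₂ has finite index in Γ₂. -/
/-!
`[Γ : Γ ∩ f Γ]` is the relative index of `f Γ` in `Γ`, and finiteness of relative indices is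
transitive even without containments. As `[f Γ₁ : f Γ₂] ≤ [Γ₁ : Γ₂] < ∞`, finiteness passes from
`Γ₁` to `Γ₂` along `f Γ₂ → f Γ₁ → Γ₁ ⊇ Γ₂`, and back along `f Γ₁ ⊇ f Γ₂ → Γ₂ → Γ₁`.
-/

namespace Subgroup

variable {G G' : Type*} [Group G] [Group G']

@[to_additive]
theorem relIndex_map_map_ne_zero (f : G →* G') {H K : Subgroup G} (h : H.relIndex K ≠ 0) :
    (H.map f).relIndex (K.map f) ≠ 0 := by
  rw [← relIndex_comap]
  exact fun h0 => h (relIndex_eq_zero_of_le_left (le_comap_map f H) h0)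

@[to_additive]
theorem relIndex_map_self_ne_zero_iff_of_le (f : G →* G) {Γ₁ Γ₂ : Subgroup G} (hle : Γ₂ ≤ Γ₁)
    (hidx : Γ₂.relIndex Γ₁ ≠ 0) :
    (Γ₁.map f).relIndex Γ₁ ≠ 0 ↔ (Γ₂.map f).relIndex Γ₂ ≠ 0 := by
  constructor
  · intro h₁
    have h₂₁ : (Γ₂.map f).relIndex Γ₁ ≠ 0 :=
      relIndex_ne_zero_trans (relIndex_map_map_ne_zero f hidx) h₁
    exact mt (relIndex_eq_zero_of_le_right hle) h₂₁
  · intro h₂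
    have h₁₂ : (Γ₁.map f).relIndex Γ₂ ≠ 0 :=
      mt (relIndex_eq_zero_of_le_left (map_mono hle)) h₂
    exact relIndex_ne_zero_trans h₁₂ hidx

end Subgroup

theorem stmt_4_general {d : ℕ} (Γ₁ Γ₂ : AddSubgroup (EuclideanSpace ℝ (Fin d)))
    (hle : Γ₂ ≤ Γ₁) (hidx : AddSubgroup.relIndex Γ₂ Γ₁ ≠ 0)
    (R : EuclideanSpace ℝ (Fin d) ≃ₗᵢ[ℝ] EuclideanSpace ℝ (Fin d)) :
    AddSubgroup.relIndex
      (Γ₁ ⊓ AddSubgroup.map R.toLinearEquiv.toLinearMap.toAddMonoidHom Γ₁) Γ₁ ≠ 0 ↔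
    AddSubgroup.relIndex
      (Γ₂ ⊓ AddSubgroup.map R.toLinearEquiv.toLinearMap.toAddMonoidHom Γ₂) Γ₂ ≠ 0 := by
  simpa only [AddSubgroup.inf_relIndex_left] using
    AddSubgroup.relIndex_map_self_ne_zero_iff_of_le _ hle hidx

theorem stmt_4 {d : ℕ} (Γ₁ Γ₂ : AddSubgroup (EuclideanSpace ℝ (Fin d)))
    (hΓ : ∃ b : Module.Basis (Fin d) ℝ (EuclideanSpace ℝ (Fin d)),
      Γ₁ = AddSubgroup.closure (Set.range b))
    (hle : Γ₂ ≤ Γ₁) (hidx : AddSubgroup.relIndex Γ₂ Γ₁ ≠ 0)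
    (R : EuclideanSpace ℝ (Fin d) ≃ₗᵢ[ℝ] EuclideanSpace ℝ (Fin d)) :
    AddSubgroup.relIndex
      (Γ₁ ⊓ AddSubgroup.map R.toLinearEquiv.toLinearMap.toAddMonoidHom Γ₁) Γ₁ ≠ 0 ↔
    AddSubgroup.relIndex
      (Γ₂ ⊓ AddSubgroup.map R.toLinearEquiv.toLinearMap.toAddMonoidHom Γ₂) Γ₂ ≠ 0 :=
  stmt_4_general Γ₁ Γ₂ hle hidx R
end

section
/- Let Γ₂ ≤ Γ₁ be subgroups of an abelian group G with [Γ₁ : Γ₂] = m finite, and let R be an automorphism of G such that Σ₁ := [Γ₁ : Γ₁(R)] and Σ₂ := [Γ₂ : Γ₂(R)] are finite (where H(R) = H ⊓ R(H)). Then Σ₁ divides m · Σ₂ and Σ₂ divides m · Σ₁. -/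
/-!
Write `H(R) = H ⊓ R(H)`, so that `[H : H(R)] = [H : R(H)]`. Multiplicativity of relative indices
in the tower `Γ₂(R) ≤ Γ₂ ≤ Γ₁` gives `Σ₁ ∣ [Γ₁ : Γ₂] Σ₂`. For the other divisibility split `Γ₂`
through `Γ₂ ⊓ R(Γ₁)`: the two steps have indices dividing `[R(Γ₁) : R(Γ₂)] = m` and `Σ₁`, because
in an abelian group `[K : H ⊓ K]` divides `[L : H ⊓ L]` whenever `K ≤ L`.
-/

namespace AddSubgroup

variable {G : Type*} [AddGroup G]

theorem relIndex_dvd_of_le_right {H K L : AddSubgroup G} [H.Normal] (hKL : K ≤ L) :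
    H.relIndex K ∣ H.relIndex L := by
  rw [← relIndex_sup_right K H, ← relIndex_sup_right L H]
  exact Dvd.intro _ (relIndex_mul_relIndex H _ _ le_sup_right (sup_le_sup_right hKL H))

variable {A₁ A₂ B₁ B₂ : AddSubgroup G}

theorem relIndex_dvd_relIndex_mul_relIndex_of_le (hA : A₂ ≤ A₁) (hB : B₂ ≤ B₁) :
    B₁.relIndex A₁ ∣ A₂.relIndex A₁ * B₂.relIndex A₂ := by
  have htower : B₂.relIndex A₂ * A₂.relIndex A₁ = (B₂ ⊓ A₂).relIndex A₁ := by
    simpa only [inf_of_le_left hA] using relIndex_inf_mul_relIndex B₂ A₂ A₁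
  rw [mul_comm, htower]
  exact relIndex_dvd_of_le_left A₁ (inf_le_left.trans hB)

theorem relIndex_dvd_relIndex_mul_relIndex_of_le_of_normal [B₁.Normal] [B₂.Normal]
    (hA : A₂ ≤ A₁) (hB : B₂ ≤ B₁) :
    B₂.relIndex A₂ ∣ B₂.relIndex B₁ * B₁.relIndex A₁ := by
  have htower : B₂.relIndex (B₁ ⊓ A₂) * B₁.relIndex A₂ = B₂.relIndex A₂ := by
    simpa only [inf_of_le_left hB] using relIndex_inf_mul_relIndex B₂ B₁ A₂
  rw [← htower]
  exact mul_dvd_mul (relIndex_dvd_of_le_right inf_le_left) (relIndex_dvd_of_le_right hA)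

end AddSubgroup

theorem stmt_7_general {G : Type*} [AddCommGroup G] (Γ₁ Γ₂ : AddSubgroup G) (hle : Γ₂ ≤ Γ₁)
    (R : G ≃+ G) (m S₁ S₂ : ℕ)
    (hm : AddSubgroup.relIndex Γ₂ Γ₁ = m)
    (hS₁ : AddSubgroup.relIndex (Γ₁ ⊓ AddSubgroup.map R.toAddMonoidHom Γ₁) Γ₁ = S₁)
    (hS₂ : AddSubgroup.relIndex (Γ₂ ⊓ AddSubgroup.map R.toAddMonoidHom Γ₂) Γ₂ = S₂) :
    S₁ ∣ m * S₂ ∧ S₂ ∣ m * S₁ := by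
  rw [AddSubgroup.inf_relIndex_left] at hS₁ hS₂
  have hmR : (Γ₂.map R.toAddMonoidHom).relIndex (Γ₁.map R.toAddMonoidHom) = m := by
    rw [AddSubgroup.relIndex_map_map_of_injective _ _ R.injective, hm]
  have hRle : Γ₂.map R.toAddMonoidHom ≤ Γ₁.map R.toAddMonoidHom := AddSubgroup.map_mono hle
  subst hm hS₁ hS₂
  refine ⟨AddSubgroup.relIndex_dvd_relIndex_mul_relIndex_of_le hle hRle, ?_⟩
  rw [← hmR]
  exact AddSubgroup.relIndex_dvd_relIndex_mul_relIndex_of_le_of_normal hle hRle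

theorem stmt_7 {G : Type*} [AddCommGroup G] (Γ₁ Γ₂ : AddSubgroup G) (hle : Γ₂ ≤ Γ₁)
    (R : G ≃+ G) (m S₁ S₂ : ℕ)
    (hm : AddSubgroup.relIndex Γ₂ Γ₁ = m) (hm0 : m ≠ 0)
    (hS₁ : AddSubgroup.relIndex (Γ₁ ⊓ AddSubgroup.map R.toAddMonoidHom Γ₁) Γ₁ = S₁)
    (hS₁0 : S₁ ≠ 0)
    (hS₂ : AddSubgroup.relIndex (Γ₂ ⊓ AddSubgroup.map R.toAddMonoidHom Γ₂) Γ₂ = S₂)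
    (hS₂0 : S₂ ≠ 0) :
    S₁ ∣ m * S₂ ∧ S₂ ∣ m * S₁ :=
  stmt_7_general Γ₁ Γ₂ hle R m S₁ S₂ hm hS₁ hS₂
end

section
/- Let Γ₂ ≤ Γ₁ be subgroups of an abelian group G with finite index m, and R an automorphism of G with [Γ₁ : Γ₁(R)] finite. Call R a colour coincidence if R(Γ₂ ⊓ Γ₁(R⁻¹)) = Γ₂ ⊓ Γ₁(R). If R is a colour coincidence, then Γ₂(R) = Γ₂ ⊓ Γ₁(R), i.e. the CSL of Γ₂ equals the set of points of Γ₂ lying in Γ₁(R). -/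
theorem AddSubgroup.inf_map_le_inf_map {G : Type*} [AddGroup G] {H K : AddSubgroup G}
    (hle : H ≤ K) (f : G →+ G) : H ⊓ H.map f ≤ K ⊓ K.map f :=
  inf_le_inf hle (AddSubgroup.map_mono hle)

theorem stmt_8_general {G : Type*} [AddCommGroup G] (Γ₁ Γ₂ : AddSubgroup G) (hle : Γ₂ ≤ Γ₁)
    (R : G ≃+ G)
    (hcc : AddSubgroup.map R.toAddMonoidHom
        (Γ₂ ⊓ (Γ₁ ⊓ AddSubgroup.map R.symm.toAddMonoidHom Γ₁)) =
      Γ₂ ⊓ (Γ₁ ⊓ AddSubgroup.map R.toAddMonoidHom Γ₁)) :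
    Γ₂ ⊓ AddSubgroup.map R.toAddMonoidHom Γ₂ =
      Γ₂ ⊓ (Γ₁ ⊓ AddSubgroup.map R.toAddMonoidHom Γ₁) := by
  have h_le_csl : Γ₂ ⊓ AddSubgroup.map R.toAddMonoidHom Γ₂ ≤
      Γ₁ ⊓ AddSubgroup.map R.toAddMonoidHom Γ₁ :=
    AddSubgroup.inf_map_le_inf_map hle R.toAddMonoidHom
  have h_le_map : Γ₂ ⊓ (Γ₁ ⊓ AddSubgroup.map R.toAddMonoidHom Γ₁) ≤
      AddSubgroup.map R.toAddMonoidHom Γ₂ := by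
    rw [← hcc]
    exact AddSubgroup.map_mono inf_le_left
  exact le_antisymm (le_inf inf_le_left h_le_csl) (le_inf inf_le_left h_le_map)

theorem stmt_8 {G : Type*} [AddCommGroup G] (Γ₁ Γ₂ : AddSubgroup G) (hle : Γ₂ ≤ Γ₁)
    (R : G ≃+ G) (m : ℕ)
    (hm : AddSubgroup.relIndex Γ₂ Γ₁ = m) (hm0 : m ≠ 0)
    (hS₁ : AddSubgroup.relIndex (Γ₁ ⊓ AddSubgroup.map R.toAddMonoidHom Γ₁) Γ₁ ≠ 0)
    (hcc : AddSubgroup.map R.toAddMonoidHom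
        (Γ₂ ⊓ (Γ₁ ⊓ AddSubgroup.map R.symm.toAddMonoidHom Γ₁)) =
      Γ₂ ⊓ (Γ₁ ⊓ AddSubgroup.map R.toAddMonoidHom Γ₁)) :
    Γ₂ ⊓ AddSubgroup.map R.toAddMonoidHom Γ₂ =
      Γ₂ ⊓ (Γ₁ ⊓ AddSubgroup.map R.toAddMonoidHom Γ₁) :=
  stmt_8_general Γ₁ Γ₂ hle R hcc
end

section
/- Let Γ₂ ≤ Γ₁ be subgroups of an abelian group G with [Γ₁ : Γ₂] = m finite, and R an automorphism of G with Σ₁ := [Γ₁ : Γ₁(R)] and Σ₂ := [Γ₂ : Γ₂(R)] finite. If R(Γ₂ ⊓ Γ₁(R⁻¹)) = Γ₂ ⊓ Γ₁(R) (R is a colour coincidence), then Σ₂ divides Σ₁. -/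
/-!
Put `K := Γ₂ ⊓ Γ₁(R)`. The colour coincidence makes `K` equal to `Γ₂(R)`, so computing `[Γ₁ : K]`
along the two chains `K ≤ Γ₂ ≤ Γ₁` and `K ≤ Γ₁(R) ≤ Γ₁` gives `Σ₂ · m = k · Σ₁` with
`k = [Γ₁(R) : K] = [Γ₁(R) : Γ₂ ⊓ Γ₁(R)]`. Since `G` is abelian, `k` divides `m = [Γ₁ : Γ₂]`, and
cancelling `k` leaves `Σ₂ ∣ Σ₁`.
-/

namespace AddSubgroup

variable {G : Type*} [AddCommGroup G]

theorem relIndex_dvd_relIndex_of_le_right (H : AddSubgroup G) {K L : AddSubgroup G}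
    (hKL : K ≤ L) : H.relIndex K ∣ H.relIndex L := by
  rw [← relIndex_addSubgroupOf hKL]
  exact relIndex_dvd_index_of_normal _ _

theorem inf_map_eq_inf_inf_map_of_map_inf_eq {Γ₁ Γ₂ : AddSubgroup G} (hle : Γ₂ ≤ Γ₁)
    (R : G ≃+ G)
    (hcc : map R.toAddMonoidHom (Γ₂ ⊓ (Γ₁ ⊓ map R.symm.toAddMonoidHom Γ₁)) =
      Γ₂ ⊓ (Γ₁ ⊓ map R.toAddMonoidHom Γ₁)) :
    Γ₂ ⊓ map R.toAddMonoidHom Γ₂ = Γ₂ ⊓ (Γ₁ ⊓ map R.toAddMonoidHom Γ₁) := by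
  refine le_antisymm ?_ (le_inf inf_le_left ?_)
  · exact le_inf inf_le_left (le_inf (inf_le_left.trans hle) (inf_le_right.trans (map_mono hle)))
  · rw [← hcc]
    exact map_mono inf_le_left

end AddSubgroup

theorem Nat.dvd_of_mul_eq_mul_of_dvd {a b k m : ℕ} (h : a * m = k * b) (hkm : k ∣ m)
    (hm : m ≠ 0) : a ∣ b := by
  obtain ⟨t, rfl⟩ := hkm
  have hk : k ≠ 0 := left_ne_zero_of_mul hm
  refine ⟨t, Nat.eq_of_mul_eq_mul_left (Nat.pos_of_ne_zero hk) ?_⟩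
  rw [← h]
  ring

theorem stmt_9_general {G : Type*} [AddCommGroup G] (Γ₁ Γ₂ : AddSubgroup G) (hle : Γ₂ ≤ Γ₁)
    (R : G ≃+ G) (m S₁ S₂ : ℕ)
    (hm : AddSubgroup.relIndex Γ₂ Γ₁ = m) (hm0 : m ≠ 0)
    (hS₁ : AddSubgroup.relIndex (Γ₁ ⊓ AddSubgroup.map R.toAddMonoidHom Γ₁) Γ₁ = S₁)
    (hS₂ : AddSubgroup.relIndex (Γ₂ ⊓ AddSubgroup.map R.toAddMonoidHom Γ₂) Γ₂ = S₂)
    (hcc : AddSubgroup.map R.toAddMonoidHom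
        (Γ₂ ⊓ (Γ₁ ⊓ AddSubgroup.map R.symm.toAddMonoidHom Γ₁)) =
      Γ₂ ⊓ (Γ₁ ⊓ AddSubgroup.map R.toAddMonoidHom Γ₁)) :
    S₂ ∣ S₁ := by
  set Γ₁R := Γ₁ ⊓ AddSubgroup.map R.toAddMonoidHom Γ₁
  rw [AddSubgroup.inf_map_eq_inf_inf_map_of_map_inf_eq hle R hcc] at hS₂
  have hindex : S₂ * m = (Γ₂ ⊓ Γ₁R).relIndex Γ₁R * S₁ := by
    rw [← hS₂, ← hm, ← hS₁, AddSubgroup.relIndex_mul_relIndex _ _ _ inf_le_left hle,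
      AddSubgroup.relIndex_mul_relIndex _ _ _ inf_le_right inf_le_left]
  have hdvd : (Γ₂ ⊓ Γ₁R).relIndex Γ₁R ∣ m := by
    rw [AddSubgroup.inf_relIndex_right, ← hm]
    exact Γ₂.relIndex_dvd_relIndex_of_le_right inf_le_left
  exact Nat.dvd_of_mul_eq_mul_of_dvd hindex hdvd hm0

theorem stmt_9 {G : Type*} [AddCommGroup G] (Γ₁ Γ₂ : AddSubgroup G) (hle : Γ₂ ≤ Γ₁)
    (R : G ≃+ G) (m S₁ S₂ : ℕ)
    (hm : AddSubgroup.relIndex Γ₂ Γ₁ = m) (hm0 : m ≠ 0)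
    (hS₁ : AddSubgroup.relIndex (Γ₁ ⊓ AddSubgroup.map R.toAddMonoidHom Γ₁) Γ₁ = S₁)
    (hS₁0 : S₁ ≠ 0)
    (hS₂ : AddSubgroup.relIndex (Γ₂ ⊓ AddSubgroup.map R.toAddMonoidHom Γ₂) Γ₂ = S₂)
    (hS₂0 : S₂ ≠ 0)
    (hcc : AddSubgroup.map R.toAddMonoidHom
        (Γ₂ ⊓ (Γ₁ ⊓ AddSubgroup.map R.symm.toAddMonoidHom Γ₁)) =
      Γ₂ ⊓ (Γ₁ ⊓ AddSubgroup.map R.toAddMonoidHom Γ₁)) :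
    S₂ ∣ S₁ :=
  stmt_9_general Γ₁ Γ₂ hle R m S₁ S₂ hm hm0 hS₁ hS₂ hcc
end

section
/- Let Γ₂ ≤ Γ₁ be subgroups of an abelian group G with [Γ₁ : Γ₂] = m finite, and R an automorphism of G with Σ₁ := [Γ₁ : Γ₁(R)] and Σ₂ := [Γ₂ : Γ₂(R)] finite. Suppose [Γ₁(R) : Γ₂ ⊓ Γ₁(R)] = m and [Γ₁(R⁻¹) : Γ₂ ⊓ Γ₁(R⁻¹)] = m (all m colours occur in both colourings). Then R is a colour coincidence (i.e. R(Γ₂ ⊓ Γ₁(R⁻¹)) = Γ₂ ⊓ Γ₁(R)) if and only if Σ₂ = Σ₁. -/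
/-!
Write `Γ(R) = Γ ⊓ R Γ`, `B = Γ₂ ⊓ Γ₁(R)` and `A = Γ₂ ⊓ Γ₁(R⁻¹)`. Since `R` maps `Γ₁(R⁻¹)` onto
`Γ₁(R)`, both `B` and `R A` have index `m` in `Γ₁(R)`, and `Γ₂(R) = B ⊓ R A`. Comparing indices
in `Γ₁` shows `[Γ₂ : B] = Σ₁`, while `[Γ₂ : Γ₂(R)] = Σ₂`. Hence `R A = B` forces `Γ₂(R) = B` and
`Σ₂ = Σ₁`; conversely `Σ₂ = Σ₁` forces `Γ₂(R) = B`, i.e. `B ≤ R A`, and two nested subgroups of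
the same finite index in `Γ₁(R)` coincide.
-/

namespace Subgroup

variable {G : Type*} [Group G]

@[to_additive]
theorem eq_of_le_of_relIndex_eq {H K L : Subgroup G} (hHK : H ≤ K) (hKL : K ≤ L)
    (h : H.relIndex L = K.relIndex L) (h0 : H.relIndex L ≠ 0) : H = K := by
  have hmul := relIndex_mul_relIndex H K L hHK hKL
  rw [h] at hmul h0
  have hone : H.relIndex K = 1 := (mul_eq_right₀ h0).mp hmul
  exact le_antisymm hHK (relIndex_eq_one.mp hone)

/-- Both sides are the index of `K ⊓ L` in `H`. -/
@[to_additive]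
theorem relIndex_mul_relIndex_comm {H K L : Subgroup G} (hK : K ≤ H) (hL : L ≤ H) :
    L.relIndex K * K.relIndex H = K.relIndex L * L.relIndex H := by
  rw [← inf_relIndex_left K L, relIndex_mul_relIndex _ _ _ inf_le_left hK,
    ← inf_relIndex_right K L, relIndex_mul_relIndex _ _ _ inf_le_right hL]

@[to_additive]
theorem relIndex_eq_of_relIndex_eq {H K L : Subgroup G} (hK : K ≤ H) (hL : L ≤ H)
    (h : K.relIndex L = K.relIndex H) (h0 : K.relIndex H ≠ 0) :
    L.relIndex K = L.relIndex H := by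
  have hcomm := relIndex_mul_relIndex_comm hK hL
  rw [h, mul_comm (K.relIndex H)] at hcomm
  exact Nat.eq_of_mul_eq_mul_right (Nat.pos_of_ne_zero h0) hcomm

variable (R : G ≃* G)

@[to_additive]
theorem map_inf_map_symm (H : Subgroup G) :
    (H ⊓ H.map R.symm.toMonoidHom).map R.toMonoidHom = H ⊓ H.map R.toMonoidHom := by
  rw [map_inf _ _ _ R.injective, map_map, inf_comm]
  congr
  convert H.map_id
  ext x
  simp

/-- With `B = K ⊓ H(R)` and `A = K ⊓ H(R⁻¹)`, this reads `K(R) = B ⊓ R A`. -/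
@[to_additive]
theorem inf_map_eq_of_le {H K : Subgroup G} (hKH : K ≤ H) :
    K ⊓ K.map R.toMonoidHom = (K ⊓ (H ⊓ H.map R.toMonoidHom)) ⊓
      (K ⊓ (H ⊓ H.map R.symm.toMonoidHom)).map R.toMonoidHom := by
  have hle : K ⊓ K.map R.toMonoidHom ≤ H ⊓ H.map R.toMonoidHom :=
    inf_le_inf hKH (map_mono hKH)
  rw [map_inf _ _ _ R.injective, map_inf_map_symm, inf_inf_inf_comm, inf_idem,
    inf_eq_left.mpr hle]

end Subgroup

open AddSubgroup in
theorem stmt_10_general {G : Type*} [AddCommGroup G] (Γ₁ Γ₂ : AddSubgroup G) (hle : Γ₂ ≤ Γ₁)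
    (R : G ≃+ G) (m S₁ S₂ : ℕ)
    (hm : AddSubgroup.relIndex Γ₂ Γ₁ = m) (hm0 : m ≠ 0)
    (hS₁ : AddSubgroup.relIndex (Γ₁ ⊓ AddSubgroup.map R.toAddMonoidHom Γ₁) Γ₁ = S₁)
    (hS₁0 : S₁ ≠ 0)
    (hS₂ : AddSubgroup.relIndex (Γ₂ ⊓ AddSubgroup.map R.toAddMonoidHom Γ₂) Γ₂ = S₂)
    (ht : AddSubgroup.relIndex (Γ₂ ⊓ (Γ₁ ⊓ AddSubgroup.map R.toAddMonoidHom Γ₁))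
      (Γ₁ ⊓ AddSubgroup.map R.toAddMonoidHom Γ₁) = m)
    (hs : AddSubgroup.relIndex (Γ₂ ⊓ (Γ₁ ⊓ AddSubgroup.map R.symm.toAddMonoidHom Γ₁))
      (Γ₁ ⊓ AddSubgroup.map R.symm.toAddMonoidHom Γ₁) = m) :
    (AddSubgroup.map R.toAddMonoidHom
        (Γ₂ ⊓ (Γ₁ ⊓ AddSubgroup.map R.symm.toAddMonoidHom Γ₁)) =
      Γ₂ ⊓ (Γ₁ ⊓ AddSubgroup.map R.toAddMonoidHom Γ₁)) ↔ S₂ = S₁ := by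
  set Γ₁R := Γ₁ ⊓ Γ₁.map R.toAddMonoidHom
  set B := Γ₂ ⊓ Γ₁R
  set RA := (Γ₂ ⊓ (Γ₁ ⊓ Γ₁.map R.symm.toAddMonoidHom)).map R.toAddMonoidHom
  have hΓ₂R : Γ₂ ⊓ Γ₂.map R.toAddMonoidHom = B ⊓ RA := inf_map_eq_of_le R hle
  have hB : B.relIndex Γ₂ = S₁ := by
    rw [inf_relIndex_left, ← hS₁]
    refine relIndex_eq_of_relIndex_eq hle inf_le_left ?_ (hm ▸ hm0)
    rw [← inf_relIndex_right, ht, hm]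
  have hmapΓ₁ : (Γ₁ ⊓ Γ₁.map R.symm.toAddMonoidHom).map R.toAddMonoidHom = Γ₁R :=
    map_inf_map_symm R Γ₁
  have hRA : RA.relIndex Γ₁R = m := by
    rw [← hmapΓ₁, relIndex_map_map_of_injective _ _ R.injective, hs]
  have hRAle : RA ≤ Γ₁R := hmapΓ₁ ▸ map_mono inf_le_right
  constructor
  · intro h
    rw [← hS₂, hΓ₂R, h, inf_idem, hB]
  · intro hS
    have hBeq : B ⊓ RA = B :=
      eq_of_le_of_relIndex_eq inf_le_left inf_le_left (by rw [← hΓ₂R, hS₂, hS, hB])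
        (by rw [← hΓ₂R, hS₂, hS]; exact hS₁0)
    exact (eq_of_le_of_relIndex_eq (inf_eq_left.mp hBeq) hRAle (by rw [ht, hRA])
      (by rw [ht]; exact hm0)).symm

theorem stmt_10 {G : Type*} [AddCommGroup G] (Γ₁ Γ₂ : AddSubgroup G) (hle : Γ₂ ≤ Γ₁)
    (R : G ≃+ G) (m S₁ S₂ : ℕ)
    (hm : AddSubgroup.relIndex Γ₂ Γ₁ = m) (hm0 : m ≠ 0)
    (hS₁ : AddSubgroup.relIndex (Γ₁ ⊓ AddSubgroup.map R.toAddMonoidHom Γ₁) Γ₁ = S₁)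
    (hS₁0 : S₁ ≠ 0)
    (hS₂ : AddSubgroup.relIndex (Γ₂ ⊓ AddSubgroup.map R.toAddMonoidHom Γ₂) Γ₂ = S₂)
    (hS₂0 : S₂ ≠ 0)
    (ht : AddSubgroup.relIndex (Γ₂ ⊓ (Γ₁ ⊓ AddSubgroup.map R.toAddMonoidHom Γ₁))
      (Γ₁ ⊓ AddSubgroup.map R.toAddMonoidHom Γ₁) = m)
    (hs : AddSubgroup.relIndex (Γ₂ ⊓ (Γ₁ ⊓ AddSubgroup.map R.symm.toAddMonoidHom Γ₁))
      (Γ₁ ⊓ AddSubgroup.map R.symm.toAddMonoidHom Γ₁) = m) :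
    (AddSubgroup.map R.toAddMonoidHom
        (Γ₂ ⊓ (Γ₁ ⊓ AddSubgroup.map R.symm.toAddMonoidHom Γ₁)) =
      Γ₂ ⊓ (Γ₁ ⊓ AddSubgroup.map R.toAddMonoidHom Γ₁)) ↔ S₂ = S₁ :=
  stmt_10_general Γ₁ Γ₂ hle R m S₁ S₂ hm hm0 hS₁ hS₁0 hS₂ ht hs
end

section
/- Let Γ₁ = ℤ² and let Γ₂ ≤ ℤ² be the subgroup generated by (3,0) and (0,1), which has index 3 in ℤ². Let R be the rotation of ℝ² with matrix (1/5)·[[4, −3],[3, 4]]. Then [Γ₂ : Γ₂ ∩ R(Γ₂)] = 5 = [Γ₁ : Γ₁ ∩ R(Γ₁)], i.e. the coincidence indices of R with respect to the rectangular sublattice and the square lattice coincide. -/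
/-!
Both lattices are images of `ℤ²` under `(a, b) ↦ (m a, b)` (`m = 1, 3`), so each relative index is
the index in `ℤ²` of the pull-back of the smaller lattice. Since `R⁻¹ (x, y) = ((4x + 3y)/5, (-3x + 4y)/5)`,
the pull-back of `Γ ∩ R(Γ)` is cut out by a single congruence mod 5 (`4a + 3b ≡ 0` for `m = 1`,
`4a + b ≡ 0` for `m = 3`), and that of `Γ₂` in `Γ₁` by `a ≡ 0 mod 3`. The index of such a
congruence subgroup is its modulus, being the kernel of a surjection onto `ZMod n`.
-/

namespace AddSubgroup

lemma index_eq_of_forall_mem_iff_dvd {n : ℕ} {c₁ c₂ : ℤ} (hc₁ : IsCoprime c₁ n)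
    {H : AddSubgroup (ℤ × ℤ)} (hH : ∀ p : ℤ × ℤ, p ∈ H ↔ (n : ℤ) ∣ c₁ * p.1 + c₂ * p.2) :
    H.index = n := by
  let f : ℤ × ℤ →+ ZMod n :=
    (Int.castAddHom (ZMod n)).comp ((AddMonoidHom.mulLeft c₁).coprod (AddMonoidHom.mulLeft c₂))
  have hf : ∀ p : ℤ × ℤ, f p = ((c₁ * p.1 + c₂ * p.2 : ℤ) : ZMod n) := fun _ => rfl
  have hker : H = f.ker := by
    ext p
    rw [hH, AddMonoidHom.mem_ker, hf, ZMod.intCast_zmod_eq_zero_iff_dvd]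
  have hsurj : Function.Surjective f := by
    obtain ⟨u, v, huv⟩ := hc₁
    intro z
    obtain ⟨k, rfl⟩ := ZMod.intCast_surjective z
    refine ⟨(u * k, 0), ?_⟩
    rw [hf, ← sub_eq_zero, ← Int.cast_sub, ZMod.intCast_zmod_eq_zero_iff_dvd]
    exact ⟨-v * k, by linear_combination k * huv⟩
  rw [hker, index_ker, f.range_eq_top_of_surjective hsurj, card_top, Nat.card_zmod]

end AddSubgroup

def rectLatticeEmb (m : ℤ) : ℤ × ℤ →+ ℝ × ℝ :=
  ((Int.castAddHom ℝ).comp (AddMonoidHom.mulLeft m)).prodMap (Int.castAddHom ℝ)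

namespace rectLatticeEmb

@[simp]
lemma apply (m : ℤ) (p : ℤ × ℤ) :
    rectLatticeEmb m p = (((m * p.1 : ℤ) : ℝ), ((p.2 : ℤ) : ℝ)) := rfl

lemma range_eq_closure (m : ℤ) :
    (rectLatticeEmb m).range = AddSubgroup.closure {((m : ℝ), (0 : ℝ)), ((0 : ℝ), (1 : ℝ))} := by
  apply le_antisymm
  · rintro _ ⟨⟨a, b⟩, rfl⟩
    have : rectLatticeEmb m (a, b) = a • ((m : ℝ), (0 : ℝ)) + b • ((0 : ℝ), (1 : ℝ)) := by
      simp [zsmul_eq_mul, mul_comm]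
    rw [this]
    exact add_mem (zsmul_mem (AddSubgroup.subset_closure (by simp)) a)
      (zsmul_mem (AddSubgroup.subset_closure (by simp)) b)
  · rw [AddSubgroup.closure_le]
    rintro p (rfl | rfl)
    · exact ⟨(1, 0), by simp⟩
    · exact ⟨(0, 1), by simp⟩

lemma div_mem_range_iff {m d x y : ℤ} (hd : d ≠ 0) :
    (((x : ℝ) / d), ((y : ℝ) / d)) ∈ (rectLatticeEmb m).range ↔ d * m ∣ x ∧ d ∣ y := by
  have hd' : (d : ℝ) ≠ 0 := Int.cast_ne_zero.mpr hd
  simp only [AddMonoidHom.mem_range, Prod.exists, apply, Prod.mk.injEq,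
    eq_div_iff hd', ← Int.cast_mul]
  constructor
  · rintro ⟨a, b, ha, hb⟩
    exact ⟨⟨a, by rw [mul_assoc, mul_comm d]; exact_mod_cast ha.symm⟩,
      ⟨b, by rw [mul_comm]; exact_mod_cast hb.symm⟩⟩
  · rintro ⟨⟨a, rfl⟩, ⟨b, rfl⟩⟩
    exact ⟨a, b, by push_cast; ring, by push_cast; ring⟩

lemma mem_range_iff {m x y : ℤ} :
    ((x : ℝ), (y : ℝ)) ∈ (rectLatticeEmb m).range ↔ m ∣ x := by
  simpa using div_mem_range_iff (m := m) (x := x) (y := y) one_ne_zero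

end rectLatticeEmb

section Rotation

variable {R : (ℝ × ℝ) ≃+ (ℝ × ℝ)}

lemma rotation_symm_apply
    (hR : ∀ p : ℝ × ℝ, R p = ((4 * p.1 - 3 * p.2) / 5, (3 * p.1 + 4 * p.2) / 5)) (p : ℝ × ℝ) :
    R.symm p = ((4 * p.1 + 3 * p.2) / 5, (-3 * p.1 + 4 * p.2) / 5) := by
  rw [AddEquiv.symm_apply_eq, hR, Prod.ext_iff]
  constructor <;> ring

lemma mem_comap_inf_map_rotation_iff
    (hR : ∀ p : ℝ × ℝ, R p = ((4 * p.1 - 3 * p.2) / 5, (3 * p.1 + 4 * p.2) / 5))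
    (m : ℤ) (p : ℤ × ℤ) :
    p ∈ ((rectLatticeEmb m).range ⊓ (rectLatticeEmb m).range.map R.toAddMonoidHom).comap
        (rectLatticeEmb m) ↔
      5 * m ∣ 4 * m * p.1 + 3 * p.2 ∧ 5 ∣ -3 * m * p.1 + 4 * p.2 := by
  rw [AddSubgroup.mem_comap, AddSubgroup.mem_inf, AddSubgroup.mem_map_equiv,
    and_iff_right ⟨p, rfl⟩, rotation_symm_apply hR,
    ← rectLatticeEmb.div_mem_range_iff (by norm_num : (5 : ℤ) ≠ 0)]
  simp [mul_assoc]

end Rotation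

theorem stmt_14 (R : (ℝ × ℝ) ≃+ (ℝ × ℝ))
    (hR : ∀ p : ℝ × ℝ, R p = ((4 * p.1 - 3 * p.2) / 5, (3 * p.1 + 4 * p.2) / 5))
    (Γ₁ Γ₂ : AddSubgroup (ℝ × ℝ))
    (hΓ₁ : Γ₁ = AddSubgroup.closure {((1 : ℝ), (0 : ℝ)), ((0 : ℝ), (1 : ℝ))})
    (hΓ₂ : Γ₂ = AddSubgroup.closure {((3 : ℝ), (0 : ℝ)), ((0 : ℝ), (1 : ℝ))}) :
    AddSubgroup.relIndex Γ₂ Γ₁ = 3 ∧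
    AddSubgroup.relIndex (Γ₂ ⊓ AddSubgroup.map R.toAddMonoidHom Γ₂) Γ₂ = 5 ∧
    AddSubgroup.relIndex (Γ₁ ⊓ AddSubgroup.map R.toAddMonoidHom Γ₁) Γ₁ = 5 := by
  obtain rfl : Γ₁ = (rectLatticeEmb 1).range := by
    rw [hΓ₁, rectLatticeEmb.range_eq_closure, Int.cast_one]
  obtain rfl : Γ₂ = (rectLatticeEmb 3).range := by
    rw [hΓ₂, rectLatticeEmb.range_eq_closure, Int.cast_ofNat]
  simp only [← AddSubgroup.index_comap]
  refine ⟨?_, ?_, ?_⟩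
  · refine AddSubgroup.index_eq_of_forall_mem_iff_dvd (c₁ := 1) (c₂ := 0) isCoprime_one_left ?_
    intro p
    rw [AddSubgroup.mem_comap, rectLatticeEmb.apply, rectLatticeEmb.mem_range_iff]
    simp
  · refine AddSubgroup.index_eq_of_forall_mem_iff_dvd (c₁ := 4) (c₂ := 1) (by norm_num) ?_
    intro p
    rw [mem_comap_inf_map_rotation_iff hR]
    omega
  · refine AddSubgroup.index_eq_of_forall_mem_iff_dvd (c₁ := 4) (c₂ := 3) (by norm_num) ?_
    intro p
    rw [mem_comap_inf_map_rotation_iff hR]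
    omega
end

section
/- Let Γ₁ = ℤ² and let Γ₂ ≤ ℤ² be the subgroup generated by (6,0) and (2,1), which has index 6 in ℤ². Let R be the rotation of ℝ² with matrix (1/5)·[[4, −3],[3, 4]]. Then the coincidence index of R with respect to Γ₂ is [Γ₂ : Γ₂ ∩ R(Γ₂)] = 10, while [Γ₁ : Γ₁ ∩ R(Γ₁)] = 5. -/
/-!
Each lattice is the image of `ℤ²` under `pairHom p q : (m, n) ↦ m • p + n • q`, and the index of
a subgroup `H` in such an image is the index of its preimage in `ℤ²`. In all three cases that
preimage is cut out by one congruence `N ∣ a m + b n` whose linear form takes the value 1, so its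
index is `N`: `6 ∣ m - 2n` for `Γ₂` in `Γ₁`, `5 ∣ 2m - n` for `Γ₁ ∩ RΓ₁`, and `10 ∣ 8m + 7n` for
`Γ₂ ∩ RΓ₂` (which packs `5 ∣ 3m + 2n` and `2 ∣ n` together). The congruences come from solving
`R k' = k` over `ℤ` after clearing the denominator 5 of `R`.
-/

open AddSubgroup

def pairHom {M : Type*} [AddCommGroup M] (p q : M) : ℤ × ℤ →+ M :=
  (zmultiplesHom M p).coprod (zmultiplesHom M q)

lemma pairHom_apply {M : Type*} [AddCommGroup M] (p q : M) (k : ℤ × ℤ) :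
    pairHom p q k = k.1 • p + k.2 • q := rfl

lemma range_pairHom {M : Type*} [AddCommGroup M] (p q : M) :
    (pairHom p q).range = closure {p, q} := by
  ext x
  simp [mem_closure_pair, Prod.exists, pairHom_apply]

lemma relIndex_range_eq_of_mem_iff_dvd {G G' : Type*} [AddGroup G] [AddGroup G']
    {f : G →+ G'} {H : AddSubgroup G'} {n : ℕ} (φ : G →+ ℤ) (k₀ : G) (hk₀ : φ k₀ = 1)
    (h : ∀ k, f k ∈ H ↔ (n : ℤ) ∣ φ k) : H.relIndex f.range = n := by
  have hφ : Function.Surjective φ := fun m => ⟨m • k₀, by simp [hk₀]⟩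
  have hcomap : H.comap f = (zmultiples (n : ℤ)).comap φ := by
    ext k
    simp [h, Int.mem_zmultiples_iff]
  rw [← index_comap, hcomap, index_comap_of_surjective _ hφ, Int.index_zmultiples,
    Int.natAbs_natCast]

lemma mem_range_inf_map_range_iff {G G' : Type*} [AddGroup G] [AddGroup G'] (f : G →+ G')
    (e : G' ≃+ G') (k : G) :
    f k ∈ f.range ⊓ f.range.map e.toAddMonoidHom ↔ ∃ k', e (f k') = f k := by
  simp

lemma rotation_intCast_eq_iff {R : (ℝ × ℝ) ≃+ (ℝ × ℝ)}
    (hR : ∀ p : ℝ × ℝ, R p = ((4 * p.1 - 3 * p.2) / 5, (3 * p.1 + 4 * p.2) / 5)) (u v a b : ℤ) :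
    R ((u : ℝ), (v : ℝ)) = ((a : ℝ), (b : ℝ)) ↔ 4 * u - 3 * v = 5 * a ∧ 3 * u + 4 * v = 5 * b := by
  simp only [hR, Prod.mk.injEq, div_eq_iff (by norm_num : (5 : ℝ) ≠ 0)]
  norm_cast
  omega

lemma pairHom_std_apply (k : ℤ × ℤ) :
    pairHom ((1 : ℝ), (0 : ℝ)) (0, 1) k = ((k.1 : ℝ), (k.2 : ℝ)) := by
  simp [pairHom_apply]

lemma pairHom_six_zero_two_one_apply (k : ℤ × ℤ) :
    pairHom ((6 : ℝ), (0 : ℝ)) (2, 1) k = (((6 * k.1 + 2 * k.2 : ℤ) : ℝ), (k.2 : ℝ)) := by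
  simp only [pairHom_apply, Prod.smul_mk, zsmul_eq_mul, smul_zero, mul_one, Prod.mk_add_mk,
    zero_add, Int.cast_add, Int.cast_mul, Int.cast_ofNat, Prod.ext_iff, and_true]
  ring

lemma pairHom_std_mem_range_iff (k : ℤ × ℤ) :
    pairHom ((1 : ℝ), (0 : ℝ)) (0, 1) k ∈ (pairHom ((6 : ℝ), (0 : ℝ)) (2, 1)).range ↔
      (6 : ℤ) ∣ pairHom 1 (-2) k := by
  simp only [AddMonoidHom.mem_range, Prod.exists, pairHom_std_apply,
    pairHom_six_zero_two_one_apply, Prod.mk.injEq, Int.cast_inj]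
  simp only [pairHom_apply, smul_eq_mul]
  constructor
  · rintro ⟨m, n, h₁, h₂⟩
    omega
  · intro h
    exact ⟨(k.1 - 2 * k.2) / 6, k.2, by omega, rfl⟩

lemma rotation_pairHom_std_iff {R : (ℝ × ℝ) ≃+ (ℝ × ℝ)}
    (hR : ∀ p : ℝ × ℝ, R p = ((4 * p.1 - 3 * p.2) / 5, (3 * p.1 + 4 * p.2) / 5)) (k : ℤ × ℤ) :
    (∃ k', R (pairHom ((1 : ℝ), (0 : ℝ)) (0, 1) k') = pairHom ((1 : ℝ), (0 : ℝ)) (0, 1) k) ↔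
      (5 : ℤ) ∣ pairHom 2 (-1) k := by
  simp only [Prod.exists, pairHom_std_apply, rotation_intCast_eq_iff hR]
  simp only [pairHom_apply, smul_eq_mul]
  constructor
  · rintro ⟨u, v, h₁, h₂⟩
    omega
  · intro h
    -- `k' = R⁻¹ k`
    exact ⟨(4 * k.1 + 3 * k.2) / 5, (-3 * k.1 + 4 * k.2) / 5, by omega, by omega⟩

lemma rotation_pairHom_six_zero_two_one_iff {R : (ℝ × ℝ) ≃+ (ℝ × ℝ)}
    (hR : ∀ p : ℝ × ℝ, R p = ((4 * p.1 - 3 * p.2) / 5, (3 * p.1 + 4 * p.2) / 5)) (k : ℤ × ℤ) :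
    (∃ k', R (pairHom ((6 : ℝ), (0 : ℝ)) (2, 1) k') = pairHom ((6 : ℝ), (0 : ℝ)) (2, 1) k) ↔
      (10 : ℤ) ∣ pairHom 8 7 k := by
  simp only [Prod.exists, pairHom_six_zero_two_one_apply, rotation_intCast_eq_iff hR]
  simp only [pairHom_apply, smul_eq_mul]
  constructor
  · rintro ⟨m, n, h₁, h₂⟩
    omega
  · intro h
    -- the coordinates of `R⁻¹ k` in the basis `(6, 0), (2, 1)`
    exact ⟨2 * k.1 + k.2 / 2, -((18 * k.1 + 2 * k.2) / 5), by omega, by omega⟩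

theorem stmt_15 (R : (ℝ × ℝ) ≃+ (ℝ × ℝ))
    (hR : ∀ p : ℝ × ℝ, R p = ((4 * p.1 - 3 * p.2) / 5, (3 * p.1 + 4 * p.2) / 5))
    (Γ₁ Γ₂ : AddSubgroup (ℝ × ℝ))
    (hΓ₁ : Γ₁ = AddSubgroup.closure {((1 : ℝ), (0 : ℝ)), ((0 : ℝ), (1 : ℝ))})
    (hΓ₂ : Γ₂ = AddSubgroup.closure {((6 : ℝ), (0 : ℝ)), ((2 : ℝ), (1 : ℝ))}) :
    AddSubgroup.relIndex Γ₂ Γ₁ = 6 ∧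
    AddSubgroup.relIndex (Γ₂ ⊓ AddSubgroup.map R.toAddMonoidHom Γ₂) Γ₂ = 10 ∧
    AddSubgroup.relIndex (Γ₁ ⊓ AddSubgroup.map R.toAddMonoidHom Γ₁) Γ₁ = 5 := by
  rw [← range_pairHom] at hΓ₁ hΓ₂
  subst hΓ₁ hΓ₂
  refine ⟨?_, ?_, ?_⟩
  · exact relIndex_range_eq_of_mem_iff_dvd (pairHom 1 (-2)) (1, 0) (by simp [pairHom_apply])
      pairHom_std_mem_range_iff
  · exact relIndex_range_eq_of_mem_iff_dvd (pairHom 8 7) (1, -1) (by simp [pairHom_apply])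
      fun k => (mem_range_inf_map_range_iff _ R k).trans (rotation_pairHom_six_zero_two_one_iff hR k)
  · exact relIndex_range_eq_of_mem_iff_dvd (pairHom 2 (-1)) (0, -1) (by simp [pairHom_apply])
      fun k => (mem_range_inf_map_range_iff _ R k).trans (rotation_pairHom_std_iff hR k)
end
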